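/- Let P(t) = d_{m-1}t^{m-1} + ⋯ + d₁t + d₀ be a polynomial with real coefficients, m ≥ 1, and H : ℕ → ℕ with H(n) = P(n) for all n ≥ α. Then for w > 0, the function z ↦ ∑_{n=0}^∞ H(n)/(n+w)^z equals ∑_{n=0}^{α-1} H(n)/(n+w)^z + ∑_{k=0}^{m-1} d_k ∑_{ℓ=0}^{k} C(k,ℓ)(-w)^ℓ ζ(z-k+ℓ, α+w) for Re(z) > m, and extends meromorphically to ℂ with simple poles contained in {1,...,m}, and residue at z = k+1 equal to ∑_{ℓ=k}^{m-1} C(ℓ,k)(-w)^{ℓ-k} d_ℓ. -/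

import Mathlib

open Complex Filter Topology

/-- The Hurwitz zeta function `ζ(z,a) = ∑_{t≥0} 1/(t+a)^z`, as a series (`Re z > 1`, `a > 0`). -/
noncomputable def hurwitzZetaSeries (z : ℂ) (a : ℝ) : ℂ :=
    ∑' t : ℕ, 1 / (((t : ℝ) + a : ℝ) : ℂ) ^ z

namespace ZBAux

open Finset Topology

noncomputable def NN (a : ℝ) : ℕ := ⌈a⌉.toNat - 1
noncomputable def BB (a : ℝ) : ℝ := a - NN a

lemma NN_cast {a : ℝ} (ha : 0 < a) : ((NN a : ℕ) : ℝ) = (⌈a⌉ : ℝ) - 1 := by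
  have h1 : (1 : ℤ) ≤ ⌈a⌉ := by exact_mod_cast Int.ceil_pos.mpr ha
  have h2 : (1 : ℕ) ≤ ⌈a⌉.toNat := by omega
  have h3 : ((⌈a⌉.toNat : ℤ)) = ⌈a⌉ := Int.toNat_of_nonneg (by omega)
  unfold NN
  push_cast [Nat.cast_sub h2]
  rw [show ((⌈a⌉.toNat : ℝ)) = ((⌈a⌉ : ℤ) : ℝ) by exact_mod_cast congrArg (((↑) : ℤ → ℝ)) h3]

lemma BB_pos {a : ℝ} (ha : 0 < a) : 0 < BB a := by
  have h2 : (⌈a⌉ : ℝ) < a + 1 := Int.ceil_lt_add_one a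
  simp only [BB, NN_cast ha]; linarith

lemma BB_le_one {a : ℝ} (ha : 0 < a) : BB a ≤ 1 := by
  have h3 : a ≤ (⌈a⌉ : ℝ) := Int.le_ceil a
  simp only [BB, NN_cast ha]; linarith

lemma BB_add_NN {a : ℝ} : BB a + (NN a : ℝ) = a := by simp [BB]

lemma coe_add_nat (x : ℝ) (n : ℕ) : ((x + n : ℝ) : UnitAddCircle) = (x : UnitAddCircle) := by
  induction n with
  | zero => norm_num
  | succ k ih =>
      push_cast
      rw [show x + ((k : ℝ) + 1) = (x + k) + 1 by ring, AddCircle.coe_add_period 1 (x + k)]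
      exact_mod_cast ih

lemma coe_BB {a : ℝ} : ((BB a : ℝ) : UnitAddCircle) = (a : UnitAddCircle) := by
  conv_rhs => rw [← BB_add_NN (a := a)]
  exact (coe_add_nat (BB a) (NN a)).symm

/-- Meromorphic continuation of `hurwitzZetaSeries · a` for `a > 0`. -/
noncomputable def CC (a : ℝ) (z : ℂ) : ℂ :=
  HurwitzZeta.hurwitzZeta (a : UnitAddCircle) z
    - ∑ t ∈ Finset.range (NN a), 1 / ((t : ℂ) + (BB a : ℂ)) ^ z

lemma hasSum_CC {a : ℝ} (ha : 0 < a) {z : ℂ} (hz : 1 < z.re) :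
    HasSum (fun t : ℕ => 1 / (((t : ℝ) + a : ℝ) : ℂ) ^ z) (CC a z) := by
  have h0 := HurwitzZeta.hasSum_hurwitzZeta_of_one_lt_re
    (a := BB a) ⟨(BB_pos ha).le, BB_le_one ha⟩ hz
  rw [coe_BB] at h0
  have h1 : HasSum (fun n : ℕ => 1 / ((↑(n + NN a) : ℂ) + (BB a : ℂ)) ^ z) (CC a z) := by
    refine (hasSum_nat_add_iff (f := fun n : ℕ => 1 / ((n : ℂ) + (BB a : ℂ)) ^ z) (NN a)).mpr ?_
    have : CC a z + ∑ i ∈ range (NN a), 1 / ((i : ℂ) + (BB a : ℂ)) ^ z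
        = HurwitzZeta.hurwitzZeta (a : UnitAddCircle) z := by
      simp [CC]
    rw [this]; exact h0
  refine h1.congr_fun fun n => ?_
  have hr : ((n + NN a : ℕ) : ℝ) + BB a = ((n : ℝ) + a : ℝ) := by
    have := BB_add_NN (a := a); push_cast; linarith
  rw [show ((n + NN a : ℕ) : ℂ) + ((BB a : ℝ) : ℂ) = ((((n : ℝ) + a : ℝ)) : ℂ) by
    exact_mod_cast congrArg (((↑) : ℝ → ℂ)) hr]

lemma analyticAt_cpow_const {c : ℂ} (hc : c ≠ 0) (z : ℂ) :
    AnalyticAt ℂ (fun z : ℂ => 1 / c ^ z) z := by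
  have h : (fun z : ℂ => 1 / c ^ z) = fun z => 1 / Complex.exp (Complex.log c * z) := by
    funext z; rw [Complex.cpow_def_of_ne_zero hc]
  rw [h]
  exact analyticAt_const.div ((analyticAt_const.mul analyticAt_id).cexp)
    (Complex.exp_ne_zero _)

lemma BB_coe_ne {a : ℝ} (ha : 0 < a) (t : ℕ) : ((t : ℂ) + (BB a : ℂ)) ≠ 0 := by
  have h : (0 : ℝ) < (t : ℝ) + BB a := by
    have := BB_pos ha
    positivity
  have h2 : (((t : ℝ) + BB a : ℝ) : ℂ) ≠ 0 := by exact_mod_cast h.ne'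
  simpa using h2

lemma analyticAt_CC {a : ℝ} (ha : 0 < a) {z : ℂ} (hz : z ≠ 1) : AnalyticAt ℂ (CC a) z := by
  have h1 : AnalyticAt ℂ (HurwitzZeta.hurwitzZeta (a : UnitAddCircle)) z := by
    have hd : DifferentiableOn ℂ (HurwitzZeta.hurwitzZeta (a : UnitAddCircle)) {(1 : ℂ)}ᶜ :=
      fun s hs => (HurwitzZeta.differentiableAt_hurwitzZeta _ hs).differentiableWithinAt
    exact hd.analyticAt (isOpen_compl_singleton.mem_nhds hz)
  refine h1.sub ?_
  exact Finset.analyticAt_fun_sum _ fun t _ => analyticAt_cpow_const (BB_coe_ne ha t) z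

lemma residue_CC {a : ℝ} (ha : 0 < a) :
    Tendsto (fun s => (s - 1) * CC a s) (𝓝[≠] 1) (𝓝 1) := by
  have h1 := HurwitzZeta.hurwitzZeta_residue_one (a : UnitAddCircle)
  have h2 : Tendsto (fun s : ℂ => (s - 1) *
      ∑ t ∈ range (NN a), 1 / ((t : ℂ) + (BB a : ℂ)) ^ s) (𝓝[≠] (1:ℂ)) (𝓝 0) := by
    have hc : ContinuousAt (fun s : ℂ => (s - 1) *
        ∑ t ∈ range (NN a), 1 / ((t : ℂ) + (BB a : ℂ)) ^ s) 1 :=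
      (((analyticAt_id.sub analyticAt_const).mul
        (Finset.analyticAt_fun_sum _ fun t _ => analyticAt_cpow_const (BB_coe_ne ha t) 1))).continuousAt
    have h4 : Tendsto (fun s : ℂ => (s - 1) *
        ∑ t ∈ range (NN a), 1 / ((t : ℂ) + (BB a : ℂ)) ^ s) (𝓝[≠] (1:ℂ))
        (𝓝 (((1:ℂ) - 1) * ∑ t ∈ range (NN a), 1 / ((t : ℂ) + (BB a : ℂ)) ^ (1:ℂ))) :=
      hc.tendsto.mono_left nhdsWithin_le_nhds
    simpa using h4
  have h3 := h1.sub h2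
  simp only [sub_zero] at h3
  refine h3.congr fun s => ?_
  simp [CC, mul_sub]

end ZBAux

/-- Proposition 3.1 (standard graded case): if `H(n) = d_{m-1}n^{m-1} + ⋯ + d₀` for `n ≥ α`,
then `ζ_H(z,w) = ∑_{n<α} H(n)/(n+w)^z + ∑_{k<m} d_k ∑_{ℓ≤k} C(k,ℓ)(-w)^ℓ ζ(z-k+ℓ, α+w)` for
`Re z > m`, and `ζ_H(·,w)` extends meromorphically to `ℂ` with simple poles contained in
`{1,…,m}`, the residue at `z = k+1` being `∑_{ℓ=k}^{m-1} C(ℓ,k)(-w)^{ℓ-k} d_ℓ`. -/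
theorem zeta_barnes_standard_graded (H : ℕ → ℕ) (m α : ℕ) (hm : 1 ≤ m) (d : ℕ → ℝ)
    (hH : ∀ n, α ≤ n → (H n : ℝ) = ∑ k ∈ Finset.range m, d k * (n : ℝ) ^ k)
    (w : ℝ) (hw : 0 < w) :
    ∃ f : ℂ → ℂ,
      (∀ z : ℂ, (m : ℝ) < z.re →
          f z = ∑' n : ℕ, (H n : ℂ) / (((n : ℝ) + w : ℝ) : ℂ) ^ z) ∧
      (∀ z : ℂ, (m : ℝ) < z.re →
          f z = (∑ n ∈ Finset.range α, (H n : ℂ) / (((n : ℝ) + w : ℝ) : ℂ) ^ z)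
            + ∑ k ∈ Finset.range m, (d k : ℂ) * ∑ ℓ ∈ Finset.range (k + 1),
                (k.choose ℓ : ℂ) * (-(w : ℂ)) ^ ℓ *
                  hurwitzZetaSeries (z - k + ℓ) ((α : ℝ) + w)) ∧
      (∀ z : ℂ, z ∉ {z : ℂ | ∃ j : ℕ, 1 ≤ j ∧ j ≤ m ∧ z = (j : ℂ)} → AnalyticAt ℂ f z) ∧
      (∀ z ∈ {z : ℂ | ∃ j : ℕ, 1 ≤ j ∧ j ≤ m ∧ z = (j : ℂ)},
          ∃ c : ℂ, Tendsto (fun s => (s - z) * f s) (nhdsWithin z {z}ᶜ) (nhds c)) ∧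
      (∀ k : ℕ, k < m →
          Tendsto (fun s => (s - ((k : ℂ) + 1)) * f s)
            (nhdsWithin ((k : ℂ) + 1) {((k : ℂ) + 1)}ᶜ)
            (nhds (∑ ℓ ∈ Finset.Icc k (m - 1),
              (ℓ.choose k : ℂ) * (-(w : ℂ)) ^ (ℓ - k) * (d ℓ : ℂ)))) := by
  have ha : (0 : ℝ) < (α : ℝ) + w := by positivity
  set a : ℝ := (α : ℝ) + w with ha_def
  set f : ℂ → ℂ := fun z =>
    (∑ n ∈ Finset.range α, (H n : ℂ) / (((n : ℝ) + w : ℝ) : ℂ) ^ z)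
      + ∑ k ∈ Finset.range m, (d k : ℂ) * ∑ ℓ ∈ Finset.range (k + 1),
          (k.choose ℓ : ℂ) * (-(w : ℂ)) ^ ℓ * ZBAux.CC a (z - k + ℓ) with hf_def
  -- real part estimate
  have hre : ∀ z : ℂ, (m : ℝ) < z.re → ∀ k : ℕ, k < m → ∀ ℓ : ℕ,
      1 < (z - (k : ℂ) + (ℓ : ℂ)).re := by
    intro z hz k hk ℓ
    have h1 : (k : ℝ) + 1 ≤ (m : ℝ) := by exact_mod_cast hk
    have h2 : (0 : ℝ) ≤ (ℓ : ℝ) := Nat.cast_nonneg ℓ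
    simp only [Complex.sub_re, Complex.add_re, Complex.natCast_re]
    linarith
  -- nonvanishing of the bases
  have hxne : ∀ n : ℕ, (((n : ℝ) + w : ℝ) : ℂ) ≠ 0 := by
    intro n
    have : (0 : ℝ) < (n : ℝ) + w := by positivity
    exact_mod_cast this.ne'
  have hXne : ∀ n : ℕ, (((n : ℝ) + a : ℝ) : ℂ) ≠ 0 := by
    intro n
    have : (0 : ℝ) < (n : ℝ) + a := by positivity
    exact_mod_cast this.ne'
  -- Property 2 (with CC in place of the series)
  have hp2 : ∀ z : ℂ, (m : ℝ) < z.re →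
      f z = (∑ n ∈ Finset.range α, (H n : ℂ) / (((n : ℝ) + w : ℝ) : ℂ) ^ z)
        + ∑ k ∈ Finset.range m, (d k : ℂ) * ∑ ℓ ∈ Finset.range (k + 1),
            (k.choose ℓ : ℂ) * (-(w : ℂ)) ^ ℓ *
              hurwitzZetaSeries (z - k + ℓ) ((α : ℝ) + w) := by
    intro z hz
    rw [hf_def]
    beta_reduce
    congr 1
    refine Finset.sum_congr rfl fun k hk => ?_
    congr 1
    refine Finset.sum_congr rfl fun ℓ hℓ => ?_
    congr 1
    exact ((ZBAux.hasSum_CC ha (hre z hz k (Finset.mem_range.mp hk) ℓ)).tsum_eq).symm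
  -- the key pointwise identity
  have key : ∀ z : ℂ, ∀ n : ℕ,
      (H (n + α) : ℂ) / ((((n + α : ℕ) : ℝ) + w : ℝ) : ℂ) ^ z
        = ∑ k ∈ Finset.range m, (d k : ℂ) * ∑ ℓ ∈ Finset.range (k + 1),
            (k.choose ℓ : ℂ) * (-(w : ℂ)) ^ ℓ *
              (1 / (((n : ℝ) + a : ℝ) : ℂ) ^ (z - k + ℓ)) := by
    intro z n
    set X : ℂ := (((n : ℝ) + a : ℝ) : ℂ) with hX_def
    have hX : X ≠ 0 := hXne n
    have hbase : ((((n + α : ℕ) : ℝ) + w : ℝ) : ℂ) = X := by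
      rw [hX_def, ha_def]; push_cast; ring
    have hnum : (H (n + α) : ℂ) = ∑ k ∈ Finset.range m, (d k : ℂ) * ((n + α : ℕ) : ℂ) ^ k := by
      have := hH (n + α) (Nat.le_add_left α n)
      exact_mod_cast congrArg ((↑) : ℝ → ℂ) this
    rw [hbase, hnum]
    have hinner : ∀ k ∈ Finset.range m,
        (d k : ℂ) * (∑ ℓ ∈ Finset.range (k + 1), (k.choose ℓ : ℂ) * (-(w : ℂ)) ^ ℓ *
          (1 / X ^ (z - k + ℓ))) = (d k : ℂ) * (((n + α : ℕ) : ℂ) ^ k / X ^ z) := by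
      intro k hk
      congr 1
      have hstep : ∀ ℓ ∈ Finset.range (k + 1),
          (k.choose ℓ : ℂ) * (-(w : ℂ)) ^ ℓ * (1 / X ^ (z - k + ℓ))
            = (-(w : ℂ)) ^ ℓ * X ^ (k - ℓ) * (k.choose ℓ : ℂ) / X ^ z := by
        intro ℓ hℓ
        have hℓk : ℓ ≤ k := Nat.lt_succ_iff.mp (Finset.mem_range.mp hℓ)
        have e1 : z - (k : ℂ) + (ℓ : ℂ) = z - ((k - ℓ : ℕ) : ℂ) := by
          push_cast [Nat.cast_sub hℓk]; ring
        rw [e1, Complex.cpow_sub _ _ hX, Complex.cpow_natCast, one_div_div]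
        ring
      rw [Finset.sum_congr rfl hstep, ← Finset.sum_div, ← add_pow]
      congr 2
      rw [hX_def, ha_def]; push_cast; ring
    rw [Finset.sum_congr rfl hinner, Finset.sum_div]
    exact Finset.sum_congr rfl fun k _ => mul_div_assoc _ _ _
  -- summability of the pieces
  have hsummE : ∀ z : ℂ, (m : ℝ) < z.re → ∀ k : ℕ, k < m → ∀ ℓ : ℕ,
      Summable (fun n : ℕ => 1 / (((n : ℝ) + a : ℝ) : ℂ) ^ (z - k + ℓ)) :=
    fun z hz k hk ℓ => (ZBAux.hasSum_CC ha (hre z hz k hk ℓ)).summable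
  -- Property 1
  have hp1 : ∀ z : ℂ, (m : ℝ) < z.re →
      f z = ∑' n : ℕ, (H n : ℂ) / (((n : ℝ) + w : ℝ) : ℂ) ^ z := by
    intro z hz
    have hSk : ∀ k ∈ Finset.range m, Summable (fun n : ℕ =>
        (d k : ℂ) * ∑ ℓ ∈ Finset.range (k + 1), (k.choose ℓ : ℂ) * (-(w : ℂ)) ^ ℓ *
          (1 / (((n : ℝ) + a : ℝ) : ℂ) ^ (z - k + ℓ))) := by
      intro k hk
      refine Summable.mul_left _ (summable_sum fun ℓ _ => ?_)
      exact (hsummE z hz k (Finset.mem_range.mp hk) ℓ).mul_left _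
    have hS2 : Summable (fun n : ℕ =>
        (H (n + α) : ℂ) / ((((n + α : ℕ) : ℝ) + w : ℝ) : ℂ) ^ z) :=
      (summable_sum hSk).congr fun n => (key z n).symm
    have hS1 : Summable (fun n : ℕ => (H n : ℂ) / (((n : ℝ) + w : ℝ) : ℂ) ^ z) :=
      (summable_nat_add_iff α).mp hS2
    rw [← hS1.sum_add_tsum_nat_add α, hf_def]
    beta_reduce
    congr 1
    refine Eq.symm ?_
    calc ∑' n : ℕ, (H (n + α) : ℂ) / ((((n + α : ℕ) : ℝ) + w : ℝ) : ℂ) ^ z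
        = ∑' n : ℕ, ∑ k ∈ Finset.range m, (d k : ℂ) *
            ∑ ℓ ∈ Finset.range (k + 1), (k.choose ℓ : ℂ) * (-(w : ℂ)) ^ ℓ *
              (1 / (((n : ℝ) + a : ℝ) : ℂ) ^ (z - k + ℓ)) := tsum_congr (key z)
      _ = ∑ k ∈ Finset.range m, ∑' n : ℕ, (d k : ℂ) *
            ∑ ℓ ∈ Finset.range (k + 1), (k.choose ℓ : ℂ) * (-(w : ℂ)) ^ ℓ *
              (1 / (((n : ℝ) + a : ℝ) : ℂ) ^ (z - k + ℓ)) := Summable.tsum_finsetSum hSk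
      _ = ∑ k ∈ Finset.range m, (d k : ℂ) * ∑ ℓ ∈ Finset.range (k + 1),
            (k.choose ℓ : ℂ) * (-(w : ℂ)) ^ ℓ * ZBAux.CC a (z - k + ℓ) := by
          refine Finset.sum_congr rfl fun k hk => ?_
          rw [tsum_mul_left]
          congr 1
          rw [Summable.tsum_finsetSum (fun ℓ _ => (hsummE z hz k (Finset.mem_range.mp hk) ℓ).mul_left _)]
          refine Finset.sum_congr rfl fun ℓ hℓ => ?_
          rw [tsum_mul_left, (ZBAux.hasSum_CC ha (hre z hz k (Finset.mem_range.mp hk) ℓ)).tsum_eq]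
  -- analyticity of the "head" sum
  have hAan : ∀ z : ℂ, AnalyticAt ℂ (fun z => ∑ n ∈ Finset.range α,
      (H n : ℂ) / (((n : ℝ) + w : ℝ) : ℂ) ^ z) z := by
    intro z
    refine Finset.analyticAt_fun_sum _ fun n _ => ?_
    have heq : (fun z : ℂ => (H n : ℂ) / (((n : ℝ) + w : ℝ) : ℂ) ^ z)
        = fun z => (H n : ℂ) * (1 / (((n : ℝ) + w : ℝ) : ℂ) ^ z) := by
      funext z; ring
    rw [heq]
    exact analyticAt_const.mul (ZBAux.analyticAt_cpow_const (hxne n) z)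
  -- analyticity away from poles
  have hp3 : ∀ z : ℂ, z ∉ {z : ℂ | ∃ j : ℕ, 1 ≤ j ∧ j ≤ m ∧ z = (j : ℂ)} →
      AnalyticAt ℂ f z := by
    intro z hz
    rw [hf_def]
    refine AnalyticAt.add (hAan z) ?_
    refine Finset.analyticAt_fun_sum _ fun k hk => ?_
    refine analyticAt_const.mul ?_
    refine Finset.analyticAt_fun_sum _ fun ℓ hℓ => ?_
    refine analyticAt_const.mul ?_
    have hℓk : ℓ ≤ k := Nat.lt_succ_iff.mp (Finset.mem_range.mp hℓ)
    have hkm : k < m := Finset.mem_range.mp hk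
    have hne : z - (k : ℂ) + (ℓ : ℂ) ≠ 1 := by
      intro h
      refine hz ⟨k - ℓ + 1, by omega, by omega, ?_⟩
      push_cast [Nat.cast_sub hℓk]
      linear_combination h
    have haff : AnalyticAt ℂ (fun s : ℂ => s - (k : ℂ) + (ℓ : ℂ)) z :=
      (analyticAt_id.sub analyticAt_const).add analyticAt_const
    have := AnalyticAt.comp (g := ZBAux.CC a) (f := fun s : ℂ => s - (k : ℂ) + (ℓ : ℂ))
      (x := z) (ZBAux.analyticAt_CC ha hne) haff
    exact this
  -- residues
  have hp5 : ∀ k : ℕ, k < m →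
      Tendsto (fun s => (s - ((k : ℂ) + 1)) * f s)
        (nhdsWithin ((k : ℂ) + 1) {((k : ℂ) + 1)}ᶜ)
        (nhds (∑ ℓ ∈ Finset.Icc k (m - 1),
          (ℓ.choose k : ℂ) * (-(w : ℂ)) ^ (ℓ - k) * (d ℓ : ℂ))) := by
    intro k₀ hk₀
    set p : ℂ := (k₀ : ℂ) + 1 with hp_def
    have hfun : ∀ s : ℂ, (s - p) * f s
        = (s - p) * (∑ n ∈ Finset.range α, (H n : ℂ) / (((n : ℝ) + w : ℝ) : ℂ) ^ s)
          + ∑ k ∈ Finset.range m, ∑ ℓ ∈ Finset.range (k + 1),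
              ((d k : ℂ) * ((k.choose ℓ : ℂ) * (-(w : ℂ)) ^ ℓ)) *
                ((s - p) * ZBAux.CC a (s - k + ℓ)) := by
      intro s
      rw [hf_def]
      beta_reduce
      rw [mul_add]
      congr 1
      rw [Finset.mul_sum]
      refine Finset.sum_congr rfl fun k _ => ?_
      rw [Finset.mul_sum, Finset.mul_sum]
      exact Finset.sum_congr rfl fun ℓ _ => by ring
    have hlimA : Tendsto (fun s : ℂ => (s - p) * (∑ n ∈ Finset.range α,
        (H n : ℂ) / (((n : ℝ) + w : ℝ) : ℂ) ^ s)) (𝓝[≠] p) (𝓝 0) := by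
      have hc : ContinuousAt (fun s : ℂ => (s - p) * (∑ n ∈ Finset.range α,
          (H n : ℂ) / (((n : ℝ) + w : ℝ) : ℂ) ^ s)) p :=
        (continuousAt_id.sub continuousAt_const).mul (hAan p).continuousAt
      have h4 : Tendsto (fun s : ℂ => (s - p) * (∑ n ∈ Finset.range α,
          (H n : ℂ) / (((n : ℝ) + w : ℝ) : ℂ) ^ s)) (𝓝[≠] p)
          (𝓝 ((p - p) * (∑ n ∈ Finset.range α,
            (H n : ℂ) / (((n : ℝ) + w : ℝ) : ℂ) ^ p))) :=
        hc.tendsto.mono_left nhdsWithin_le_nhds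
      simpa using h4
    have hterm : ∀ k ∈ Finset.range m, ∀ ℓ ∈ Finset.range (k + 1),
        Tendsto (fun s : ℂ => (s - p) * ZBAux.CC a (s - k + ℓ)) (𝓝[≠] p)
          (𝓝 (if k = ℓ + k₀ then (1 : ℂ) else 0)) := by
      intro k hk ℓ hℓ
      by_cases hcase : k = ℓ + k₀
      · rw [if_pos hcase]
        have hp1 : p - (k : ℂ) + (ℓ : ℂ) = 1 := by
          rw [hp_def, hcase]; push_cast; ring
        have hφ : Tendsto (fun s : ℂ => s - (k : ℂ) + (ℓ : ℂ)) (𝓝[≠] p) (𝓝[≠] (1 : ℂ)) := by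
          have hco : ContinuousWithinAt (fun s : ℂ => s - (k : ℂ) + (ℓ : ℂ)) {p}ᶜ p :=
            (((continuous_id.sub continuous_const).add continuous_const).continuousAt
              (x := p)).continuousWithinAt
          have hmap : Set.MapsTo (fun s : ℂ => s - (k : ℂ) + (ℓ : ℂ)) {p}ᶜ {(1 : ℂ)}ᶜ := by
            intro s hs h1
            simp only [Set.mem_compl_iff, Set.mem_singleton_iff] at hs h1 ⊢
            apply hs
            have : s - (k : ℂ) + (ℓ : ℂ) = p - (k : ℂ) + (ℓ : ℂ) := by rw [h1, hp1]
            linear_combination this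
          have := hco.tendsto_nhdsWithin hmap
          rwa [hp1] at this
        have hres := (ZBAux.residue_CC ha).comp hφ
        refine hres.congr fun s => ?_
        simp only [Function.comp]
        congr 1
        linear_combination hp1
      · rw [if_neg hcase]
        have hne : p - (k : ℂ) + (ℓ : ℂ) ≠ 1 := by
          intro h
          apply hcase
          have h2 : (k : ℂ) = (ℓ : ℂ) + (k₀ : ℂ) := by
            rw [hp_def] at h; linear_combination -h
          exact_mod_cast h2
        have haffc : ContinuousAt (fun s : ℂ => s - (k : ℂ) + (ℓ : ℂ)) p :=
          ((continuous_id.sub continuous_const).add continuous_const).continuousAt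
        have hcc : ContinuousAt (fun s : ℂ => ZBAux.CC a (s - (k : ℂ) + (ℓ : ℂ))) p := by
          have := ContinuousAt.comp (g := ZBAux.CC a)
            (f := fun s : ℂ => s - (k : ℂ) + (ℓ : ℂ)) (x := p)
            (ZBAux.analyticAt_CC ha hne).continuousAt haffc
          exact this
        have hc : ContinuousAt
            (fun s : ℂ => (s - p) * ZBAux.CC a (s - (k : ℂ) + (ℓ : ℂ))) p :=
          (continuousAt_id.sub continuousAt_const).mul hcc
        have h4 : Tendsto (fun s : ℂ => (s - p) * ZBAux.CC a (s - (k : ℂ) + (ℓ : ℂ)))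
            (𝓝[≠] p) (𝓝 ((p - p) * ZBAux.CC a (p - (k : ℂ) + (ℓ : ℂ)))) :=
          hc.tendsto.mono_left nhdsWithin_le_nhds
        simpa using h4
    have hsum : Tendsto (fun s : ℂ => ∑ k ∈ Finset.range m, ∑ ℓ ∈ Finset.range (k + 1),
        ((d k : ℂ) * ((k.choose ℓ : ℂ) * (-(w : ℂ)) ^ ℓ)) * ((s - p) * ZBAux.CC a (s - k + ℓ)))
        (𝓝[≠] p) (𝓝 (∑ k ∈ Finset.range m, ∑ ℓ ∈ Finset.range (k + 1),
          ((d k : ℂ) * ((k.choose ℓ : ℂ) * (-(w : ℂ)) ^ ℓ)) *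
            (if k = ℓ + k₀ then (1 : ℂ) else 0))) := by
      refine tendsto_finset_sum _ fun k hk => tendsto_finset_sum _ fun ℓ hℓ => ?_
      exact tendsto_const_nhds.mul (hterm k hk ℓ hℓ)
    have htot := hlimA.add hsum
    rw [zero_add] at htot
    have htot' := htot.congr fun s => (hfun s).symm
    have hval : (∑ k ∈ Finset.range m, ∑ ℓ ∈ Finset.range (k + 1),
        ((d k : ℂ) * ((k.choose ℓ : ℂ) * (-(w : ℂ)) ^ ℓ)) *
          (if k = ℓ + k₀ then (1 : ℂ) else 0))
        = ∑ ℓ ∈ Finset.Icc k₀ (m - 1), (ℓ.choose k₀ : ℂ) * (-(w : ℂ)) ^ (ℓ - k₀) * (d ℓ : ℂ) := by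
      have h1 : ∀ k ∈ Finset.range m, (∑ ℓ ∈ Finset.range (k + 1),
          ((d k : ℂ) * ((k.choose ℓ : ℂ) * (-(w : ℂ)) ^ ℓ)) *
            (if k = ℓ + k₀ then (1 : ℂ) else 0))
          = if k₀ ≤ k then (k.choose k₀ : ℂ) * (-(w : ℂ)) ^ (k - k₀) * (d k : ℂ) else 0 := by
        intro k hk
        by_cases hkk : k₀ ≤ k
        · rw [if_pos hkk]
          rw [Finset.sum_eq_single (k - k₀)]
          · rw [if_pos (by omega), Nat.choose_symm hkk]
            ring
          · intro ℓ hℓ' hne'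
            rw [if_neg (by omega), mul_zero]
          · intro habs
            exact absurd (Finset.mem_range.mpr (by omega)) habs
        · rw [if_neg hkk]
          refine Finset.sum_eq_zero fun ℓ hℓ' => ?_
          rw [if_neg (by omega), mul_zero]
      rw [Finset.sum_congr rfl h1, ← Finset.sum_filter,
        show Finset.filter (fun k => k₀ ≤ k) (Finset.range m) = Finset.Icc k₀ (m - 1) by
          ext x; simp [Finset.mem_filter, Finset.mem_range, Finset.mem_Icc]; omega]
    rwa [hval] at htot'
  exact ⟨f, hp1, hp2, hp3, fun z hzmem => by
    obtain ⟨j, hj1, hjm, rfl⟩ := hzmem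
    have hcast : ((j - 1 : ℕ) : ℂ) + 1 = (j : ℂ) := by
      have h : j - 1 + 1 = j := by omega
      exact_mod_cast congrArg ((↑) : ℕ → ℂ) h
    have h5 := hp5 (j - 1) (by omega)
    rw [hcast] at h5
    exact ⟨_, h5⟩, hp5⟩
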